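/- arXiv:2009.13139 — 7 statements merged into one kernel-verified Lean document; each statement's English description precedes it below -/
import Mathlib

section
/- Ranocha's flux is entropy-conservative: for every γ > 1 and every pair of states u₋ = (ρ₋, v₋, p₋), u₊ = (ρ₊, v₊, p₊) with ρ₋ ≠ ρ₊ and ρ₋/p₋ ≠ ρ₊/p₊, Tadmor's entropy-conservation condition ⟦w⟧ · f^num(u₋, u₊) = ⟦ψ⟧ holds for Ranocha's flux f^num. -/
noncomputable section
open Real

/-- A state `u = (ρ, v, p)` of the 1D compressible Euler equations:
density `u.1`, velocity `u.2.1`, pressure `u.2.2`. -/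
abbrev EulerState := ℝ × ℝ × ℝ

/-- Entropy variables `w(u)` for the entropy `U = -ρ s/(γ-1)`, `s = log(p/ρ^γ)`. -/
def entVar (γ : ℝ) (u : EulerState) : EulerState :=
  (γ/(γ-1) - Real.log (u.2.2 / u.1 ^ γ)/(γ-1) - u.1 * u.2.1^2/(2*u.2.2),
   u.1*u.2.1/u.2.2,
   -(u.1/u.2.2))

/-- Euclidean dot product on `ℝ × ℝ × ℝ`. -/
def dot3 (a b : EulerState) : ℝ := a.1*b.1 + a.2.1*b.2.1 + a.2.2*b.2.2

/-- Logarithmic mean `(a₊ - a₋)/(log a₊ - log a₋)` (left argument is the `-` state). -/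
def logMean (am ap : ℝ) : ℝ := (ap - am)/(Real.log ap - Real.log am)

/-- Ranocha's EC, KEP and PEP two-point numerical flux. -/
def ranochaFlux (γ : ℝ) (um up : EulerState) : EulerState :=
  (logMean um.1 up.1 * ((um.2.1 + up.2.1)/2),
   logMean um.1 up.1 * ((um.2.1 + up.2.1)/2)^2 + (um.2.2 + up.2.2)/2,
   (1/2) * logMean um.1 up.1 * ((um.2.1 + up.2.1)/2) * ((up.2.1*um.2.1 + um.2.1*up.2.1)/2)
     + (1/(γ-1)) * logMean um.1 up.1 * (logMean (um.1/um.2.2) (up.1/up.2.2))⁻¹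
        * ((um.2.1 + up.2.1)/2)
     + (up.2.2*um.2.1 + um.2.2*up.2.1)/2)

/-!
With `β = ρ/p`, the specific entropy is `s = -log β - (γ-1) log ρ`, so the first entropy
variable jumps by `⟦log ρ⟧ + ⟦log β⟧/(γ-1) - ⟦β v²⟧/2`. The logarithmic means are exactly what
turns the logarithmic jumps into ordinary ones: `ρ^log ⟦log ρ⟧ = ⟦ρ⟧` and
`(β^log)⁻¹ ⟦β⟧ = ⟦log β⟧`, and the second identity makes the two terms carrying `1/(γ-1)`
cancel. What is left is a polynomial identity in `β±, v±, p±` once `β± p± = ρ±` is used: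
the kinetic terms cancel and the pressure terms reduce `⟦w⟧ ⬝ f^num` to the discrete product
rule `⟦ρ⟧{v} + {ρ}⟦v⟧ = ⟦ρ v⟧`.
-/

theorem logMean_mul_log_sub_log {a b : ℝ} (ha : 0 < a) (hb : 0 < b) (hab : a ≠ b) :
    logMean a b * (Real.log b - Real.log a) = b - a :=
  div_mul_cancel₀ _ (sub_ne_zero.mpr fun h => hab (Real.log_injOn_pos hb ha h).symm)

theorem inv_logMean_mul_sub {a b : ℝ} (hab : a ≠ b) :
    (logMean a b)⁻¹ * (b - a) = Real.log b - Real.log a := by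
  rw [logMean, inv_div, div_mul_cancel₀ _ (sub_ne_zero.mpr hab.symm)]

theorem log_div_rpow_eq {ρ p : ℝ} (γ : ℝ) (hρ : 0 < ρ) (hp : 0 < p) :
    Real.log (p / ρ ^ γ) = -Real.log (ρ / p) - (γ - 1) * Real.log ρ := by
  rw [Real.log_div hp.ne' (Real.rpow_pos_of_pos hρ γ).ne', Real.log_rpow hρ,
    Real.log_div hρ.ne' hp.ne']
  ring

theorem entVar_eq {γ : ℝ} (hγ : γ ≠ 1) {ρ p : ℝ} (v : ℝ) (hρ : 0 < ρ) (hp : 0 < p) :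
    entVar γ (ρ, v, p) =
      (γ / (γ - 1) + Real.log (ρ / p) / (γ - 1) + Real.log ρ - ρ / p * v ^ 2 / 2,
        ρ / p * v, -(ρ / p)) := by
  have hγ' : γ - 1 ≠ 0 := sub_ne_zero.mpr hγ
  simp only [entVar, log_div_rpow_eq γ hρ hp, Prod.mk.injEq, and_true]
  constructor
  · field_simp
    ring
  · ring

/-- Ranocha's flux is entropy-conservative: Tadmor's condition
`⟦w⟧ ⬝ f^num = ⟦ψ⟧` with flux potential `ψ = ρ v` holds for all admissible pairs
of states with `ρ₋ ≠ ρ₊` and `ρ₋/p₋ ≠ ρ₊/p₊`. -/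
theorem ranochaFlux_entropy_conservative
    (γ : ℝ) (hγ : 1 < γ)
    (ρm ρp vm vp pm pp : ℝ)
    (hρm : 0 < ρm) (hρp : 0 < ρp) (hpm : 0 < pm) (hpp : 0 < pp)
    (hρ : ρm ≠ ρp) (hρovp : ρm/pm ≠ ρp/pp) :
    dot3 (entVar γ (ρp, vp, pp) - entVar γ (ρm, vm, pm))
        (ranochaFlux γ (ρm, vm, pm) (ρp, vp, pp))
      = ρp * vp - ρm * vm := by
  have hρL := logMean_mul_log_sub_log hρm hρp hρ
  have hβL := inv_logMean_mul_sub hρovp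
  rw [entVar_eq hγ.ne' vm hρm hpm, entVar_eq hγ.ne' vp hρp hpp]
  simp only [dot3, ranochaFlux, Prod.fst_sub, Prod.snd_sub]
  have hm : ρm / pm * pm = ρm := div_mul_cancel₀ ρm hpm.ne'
  have hp : ρp / pp * pp = ρp := div_mul_cancel₀ ρp hpp.ne'
  linear_combination ((vm + vp) / 2) * hρL
    - (1 / (γ - 1)) * logMean ρm ρp * ((vm + vp) / 2) * hβL + ((vp - vm) / 2) * (hm + hp)
end
end

section
/- Uniqueness part of the main theorem: let γ > 1 and let f^num be a continuous, consistent numerical two-point flux for the compressible Euler equations that is EC, KEP, and PEP, and whose density component f^num_ρ(u₋, u₊) depends only on the densities and velocities ρ₋, ρ₊, v₋, v₊ and not on the pressures p₋, p₊. Then for every pair of states with equal velocities v₋ = v₊, with ρ₋ ≠ ρ₊ and ρ₋/p₋ ≠ ρ₊/p₊, the value f^num(u₋, u₊) coincides with Ranocha's flux, i.e. f^num_ρ = ρ^log {v}, f^num_{ρv} = ρ^log {v}² + {p}, f^num_{ρe} = (1/2) ρ^log {v} {{v·v}} + (1/(γ−1)) ρ^log ((ρ/p)^log)^{−1} {v}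 + {{p·v}}. -/
noncomputable section
open Real

/-- Entropy conservation (EC) in the sense of Tadmor: `⟦w⟧ ⬝ f^num = ⟦ψ⟧`, `ψ = ρ v`. -/
def IsEC (γ : ℝ) (f : EulerState → EulerState → EulerState) : Prop :=
  ∀ um up : EulerState, 0 < um.1 → 0 < um.2.2 → 0 < up.1 → 0 < up.2.2 →
    dot3 (entVar γ up - entVar γ um) (f um up) = up.1 * up.2.1 - um.1 * um.2.1

/-- Kinetic energy preservation (KEP): `f^num_{ρv} = {v} f^num_ρ + {p}`. -/
def IsKEP (f : EulerState → EulerState → EulerState) : Prop :=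
  ∀ um up : EulerState, 0 < um.1 → 0 < um.2.2 → 0 < up.1 → 0 < up.2.2 →
    (f um up).2.1 = ((um.2.1 + up.2.1)/2) * (f um up).1 + (um.2.2 + up.2.2)/2

/-- Pressure equilibrium preservation (PEP): at any pressure equilibrium
`v₋ = v₊ = v`, `p₋ = p₊ = p` the momentum and energy fluxes are
`v f^num_ρ + c₁(p,v)` and `(v²/2) f^num_ρ + c₂(p,v)` for functions `c₁, c₂` of `(p, v)` only. -/
def IsPEP (f : EulerState → EulerState → EulerState) : Prop :=
  ∃ c₁ c₂ : ℝ → ℝ → ℝ, ∀ ρm ρp v p : ℝ, 0 < ρm → 0 < ρp → 0 < p →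
    (f (ρm, v, p) (ρp, v, p)).2.1 = v * (f (ρm, v, p) (ρp, v, p)).1 + c₁ p v ∧
    (f (ρm, v, p) (ρp, v, p)).2.2 = (v^2/2) * (f (ρm, v, p) (ρp, v, p)).1 + c₂ p v

/-- Consistency: `f^num(u, u) = f(u)`, the Euler flux. -/
def IsConsistent (γ : ℝ) (f : EulerState → EulerState → EulerState) : Prop :=
  ∀ ρ v p : ℝ, 0 < ρ → 0 < p →
    f (ρ, v, p) (ρ, v, p) = (ρ*v, ρ*v^2 + p, (p/(γ-1) + ρ*v^2/2 + p)*v)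

lemma dot_entVar (γ ρm ρp v pm pp : ℝ) (hρm : 0 < ρm) (hρp : 0 < ρp)
    (hpm : 0 < pm) (hpp : 0 < pp) (hγ0 : γ - 1 ≠ 0) (F : EulerState) :
    dot3 (entVar γ (ρp,v,pp) - entVar γ (ρm,v,pm)) F =
      (-((Real.log pp - Real.log pm) - γ*(Real.log ρp - Real.log ρm))/(γ-1)
        - (v^2/2)*(ρp/pp - ρm/pm)) * F.1
      + v*(ρp/pp - ρm/pm) * F.2.1
      - (ρp/pp - ρm/pm) * F.2.2 := by
  simp only [entVar, dot3, Prod.fst_sub, Prod.snd_sub]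
  rw [Real.log_div hpp.ne' (Real.rpow_pos_of_pos hρp γ).ne',
      Real.log_div hpm.ne' (Real.rpow_pos_of_pos hρm γ).ne',
      Real.log_rpow hρp, Real.log_rpow hρm]
  field_simp
  ring

lemma log_sub_ne (a b : ℝ) (ha : 0 < a) (hb : 0 < b) (h : a ≠ b) :
    Real.log b - Real.log a ≠ 0 := by
  intro hc
  exact h (Real.log_injOn_pos (Set.mem_Ioi.2 ha) (Set.mem_Ioi.2 hb)
    (by linarith))

lemma key_id (γ L M v B r s P Q : ℝ) (hγ0 : γ-1 ≠ 0) (hL : L ≠ 0) (hB : B ≠ 0) :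
    (-((L - M) - γ*L)/(γ-1) - v^2/2*B) * ((s-r)/L * ((v+v)/2))
      + v*B*(((v+v)/2)*((s-r)/L*((v+v)/2)) + (P+Q)/2) - (s*v - r*v)
    = B * ((1/2)*((s-r)/L)*((v+v)/2)*((v*v+v*v)/2)
        + (1/(γ-1))*((s-r)/L)*(M/B)*((v+v)/2) + (Q*v+P*v)/2) := by
  field_simp
  ring

/-- uniqueness part of the main theorem. Any continuous, consistent
two-point flux which is EC, KEP and PEP and whose density flux does not depend on
the pressures must coincide with Ranocha's flux on all pairs of states with equal
velocities, `ρ₋ ≠ ρ₊` and `ρ₋/p₋ ≠ ρ₊/p₊`. -/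
theorem ec_kep_pep_flux_unique
    (γ : ℝ) (hγ : 1 < γ) (f : EulerState → EulerState → EulerState)
    (hcont : ContinuousOn (fun q : EulerState × EulerState => f q.1 q.2)
      {q : EulerState × EulerState | 0 < q.1.1 ∧ 0 < q.1.2.2 ∧ 0 < q.2.1 ∧ 0 < q.2.2.2})
    (hcons : IsConsistent γ f)
    (hEC : IsEC γ f) (hKEP : IsKEP f) (hPEP : IsPEP f)
    (hdens : ∀ ρm ρp vm vp pm pp qm qp : ℝ,
      0 < ρm → 0 < ρp → 0 < pm → 0 < pp → 0 < qm → 0 < qp →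
      (f (ρm, vm, pm) (ρp, vp, pp)).1 = (f (ρm, vm, qm) (ρp, vp, qp)).1) :
    ∀ ρm ρp v pm pp : ℝ, 0 < ρm → 0 < ρp → 0 < pm → 0 < pp →
      ρm ≠ ρp → ρm/pm ≠ ρp/pp →
      f (ρm, v, pm) (ρp, v, pp) = ranochaFlux γ (ρm, v, pm) (ρp, v, pp) := by
  intro ρm ρp v pm pp hρm hρp hpm hpp hρ hβ
  have hγ0 : γ - 1 ≠ 0 := by linarith
  have hLρ : Real.log ρp - Real.log ρm ≠ 0 := log_sub_ne _ _ hρm hρp hρ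
  have hβm : (0:ℝ) < ρm/pm := div_pos hρm hpm
  have hβp : (0:ℝ) < ρp/pp := div_pos hρp hpp
  have hLβ : Real.log (ρp/pp) - Real.log (ρm/pm) ≠ 0 := log_sub_ne _ _ hβm hβp hβ
  have hΔβ : ρp/pp - ρm/pm ≠ 0 := sub_ne_zero.2 (Ne.symm hβ)
  -- Step 1: density flux, via EC at auxiliary states with p = ρ
  have h1 := hEC (ρm, v, ρm) (ρp, v, ρp) hρm hρm hρp hρp
  rw [dot_entVar γ ρm ρp v ρm ρp hρm hρp hρm hρp hγ0] at h1
  rw [div_self hρm.ne', div_self hρp.ne'] at h1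
  have ecoef : (-(Real.log ρp - Real.log ρm - γ*(Real.log ρp - Real.log ρm))/(γ-1)
      - v^2/2*((1:ℝ)-1)) = Real.log ρp - Real.log ρm := by
    field_simp
    ring
  rw [ecoef] at h1
  norm_num at h1
  have hF1 : (f (ρm,v,pm) (ρp,v,pp)).1 = logMean ρm ρp * ((v+v)/2) := by
    rw [hdens ρm ρp v v pm pp ρm ρp hρm hρp hpm hpp hρm hρp, logMean,
      div_mul_eq_mul_div, eq_comm, div_eq_iff hLρ]
    linear_combination -h1
  -- Step 2: momentum flux via KEP
  have hF2 : (f (ρm,v,pm) (ρp,v,pp)).2.1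
      = ((v+v)/2) * (f (ρm,v,pm) (ρp,v,pp)).1 + (pm+pp)/2 :=
    hKEP (ρm, v, pm) (ρp, v, pp) hρm hpm hρp hpp
  -- Step 3: energy flux via EC at the actual states
  have h2 := hEC (ρm, v, pm) (ρp, v, pp) hρm hpm hρp hpp
  rw [dot_entVar γ ρm ρp v pm pp hρm hρp hpm hpp hγ0, hF2, hF1] at h2
  have hlogp : Real.log pp - Real.log pm
      = (Real.log ρp - Real.log ρm) - (Real.log (ρp/pp) - Real.log (ρm/pm)) := by
    rw [Real.log_div hρp.ne' hpp.ne', Real.log_div hρm.ne' hpm.ne']; ring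
  rw [hlogp] at h2
  norm_num at h2
  have hE : (ρp/pp - ρm/pm) * (f (ρm,v,pm) (ρp,v,pp)).2.2
      = (-(((Real.log ρp - Real.log ρm) - (Real.log (ρp/pp) - Real.log (ρm/pm)))
            - γ*(Real.log ρp - Real.log ρm))/(γ-1)
          - v^2/2*(ρp/pp - ρm/pm)) * (logMean ρm ρp * ((v+v)/2))
        + v*(ρp/pp - ρm/pm) * (((v+v)/2) * (logMean ρm ρp * ((v+v)/2)) + (pm+pp)/2)
        - (ρp*v - ρm*v) := by
    linear_combination -h2
  have hΔβ' : ρp * pm - ρm * pp ≠ 0 := by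
    intro h
    apply hΔβ
    rw [div_sub_div _ _ hpp.ne' hpm.ne']
    rw [show ρp * pm - pp * ρm = ρp * pm - ρm * pp by ring, h, zero_div]
  have key : (-(((Real.log ρp - Real.log ρm) - (Real.log (ρp/pp) - Real.log (ρm/pm)))
            - γ*(Real.log ρp - Real.log ρm))/(γ-1)
          - v^2/2*(ρp/pp - ρm/pm)) * (logMean ρm ρp * ((v+v)/2))
        + v*(ρp/pp - ρm/pm) * (((v+v)/2) * (logMean ρm ρp * ((v+v)/2)) + (pm+pp)/2)
        - (ρp*v - ρm*v)
      = (ρp/pp - ρm/pm) *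
        ((1/2) * logMean ρm ρp * ((v+v)/2) * ((v*v + v*v)/2)
          + (1/(γ-1)) * logMean ρm ρp * (logMean (ρm/pm) (ρp/pp))⁻¹ * ((v+v)/2)
          + (pp*v + pm*v)/2) := by
    rw [logMean, logMean, inv_div]
    exact key_id γ (Real.log ρp - Real.log ρm) (Real.log (ρp/pp) - Real.log (ρm/pm))
      v (ρp/pp - ρm/pm) ρm ρp pm pp hγ0 hLρ hΔβ
  have hF3 : (f (ρm,v,pm) (ρp,v,pp)).2.2
      = (1/2) * logMean ρm ρp * ((v+v)/2) * ((v*v + v*v)/2)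
        + (1/(γ-1)) * logMean ρm ρp * (logMean (ρm/pm) (ρp/pp))⁻¹ * ((v+v)/2)
        + (pp*v + pm*v)/2 :=
    mul_left_cancel₀ hΔβ (hE.trans key)
  refine Prod.ext ?_ (Prod.ext ?_ ?_)
  · exact hF1
  · show _ = logMean ρm ρp * ((v+v)/2)^2 + (pm+pp)/2
    rw [hF2, hF1]; ring
  · exact hF3
end
end

section
/- Let γ > 1, p > 0, v ∈ ℝ, and ρ₋, ρ₊ > 0 with ρ₋ ≠ ρ₊, and set u₋ = (ρ₋, v, p), u₊ = (ρ₊, v, p). If a vector (a, b, c) ∈ ℝ³ satisfies the entropy-conservation relation ⟦w⟧ · (a, b, c) = ⟦ψ⟧ together with the momentum relation b = v a + p, then c = (v²/2) a + (γ/(γ−1)) (p/ρ^log) a, where ρ^log = (ρ₊ − ρ₋)/(log ρ₊ − log ρ₋). -/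
/-!
With `v` and `p` equal on both sides, `⟦w⟧ = (γ/(γ-1) ⟦log ρ⟧ - ⟦ρ⟧ v²/(2p), ⟦ρ⟧ v/p, -⟦ρ⟧/p)`.
Substituting `b = v a + p` into `⟦w⟧ ⬝ (a, b, c) = ⟦ρ⟧ v`, the pressure part of `b` cancels the
right-hand side and the kinetic terms combine, leaving
`c ⟦ρ⟧/p = γ/(γ-1) ⟦log ρ⟧ a + ⟦ρ⟧ v² a/(2p)`, which is solved for `c` because `⟦ρ⟧ ≠ 0`.
-/

noncomputable section
open Real

theorem Real.log_div_rpow {p ρ : ℝ} (γ : ℝ) (hp : p ≠ 0) (hρ : 0 < ρ) :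
    log (p / ρ ^ γ) = log p - γ * log ρ := by
  rw [Real.log_div hp (Real.rpow_pos_of_pos hρ γ).ne', Real.log_rpow hρ]

theorem entVar_sub_entVar_of_eq_velocity_pressure (γ v : ℝ) {p ρm ρp : ℝ} (hp : p ≠ 0)
    (hρm : 0 < ρm) (hρp : 0 < ρp) :
    entVar γ (ρp, v, p) - entVar γ (ρm, v, p) =
      (γ / (γ - 1) * (log ρp - log ρm) - (ρp - ρm) * v ^ 2 / (2 * p),
       (ρp - ρm) * v / p,
       -((ρp - ρm) / p)) := by
  simp only [entVar, Prod.mk_sub_mk, Prod.mk.injEq, Real.log_div_rpow γ hp hρm,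
    Real.log_div_rpow γ hp hρp]
  exact ⟨by ring, by ring, by ring⟩

theorem ec_kep_pep_energy_flux_general
    (γ : ℝ) (p v ρm ρp : ℝ)
    (hp : 0 < p) (hρm : 0 < ρm) (hρp : 0 < ρp) (hne : ρm ≠ ρp)
    (a b c : ℝ)
    (hEC : dot3 (entVar γ (ρp, v, p) - entVar γ (ρm, v, p)) (a, b, c)
            = ρp * v - ρm * v)
    (hmom : b = v * a + p) :
    c = (v^2/2) * a + (γ/(γ-1)) * (p / logMean ρm ρp) * a := by
  have hΔ : ρp - ρm ≠ 0 := sub_ne_zero.mpr hne.symm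
  rw [entVar_sub_entVar_of_eq_velocity_pressure γ v hp.ne' hρm hρp, dot3, hmom] at hEC
  rw [logMean, div_div_eq_mul_div]
  field_simp at hEC ⊢
  linear_combination -hEC

/-- at a pressure equilibrium `u₋ = (ρ₋, v, p)`, `u₊ = (ρ₊, v, p)`
with `ρ₋ ≠ ρ₊`, any vector `(a, b, c)` satisfying the entropy-conservation
relation `⟦w⟧ ⬝ (a,b,c) = ⟦ψ⟧` and the momentum relation `b = v a + p`
satisfies `c = (v²/2) a + (γ/(γ-1)) (p/ρ^log) a`. -/
theorem ec_kep_pep_energy_flux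
    (γ : ℝ) (hγ : 1 < γ) (p v ρm ρp : ℝ)
    (hp : 0 < p) (hρm : 0 < ρm) (hρp : 0 < ρp) (hne : ρm ≠ ρp)
    (a b c : ℝ)
    (hEC : dot3 (entVar γ (ρp, v, p) - entVar γ (ρm, v, p)) (a, b, c)
            = ρp * v - ρm * v)
    (hmom : b = v * a + p) :
    c = (v^2/2) * a + (γ/(γ-1)) * (p / logMean ρm ρp) * a :=
  ec_kep_pep_energy_flux_general γ p v ρm ρp hp hρm hρp hne a b c hEC hmom
end
end

section
/- Let γ > 1 and let f^num be a continuous, consistent numerical two-point flux for the compressible Euler equations that is EC and PEP. Then for every p > 0, every v ∈ ℝ, and all densities ρ₋ ≠ ρ₊ > 0 one has f^num((ρ₋, v, p), (ρ₊, v, p)) = ( ρ^log v, ρ^log v² + p, (1/2) ρ^log v³ + (γ/(γ−1)) p v ). -/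
/-!
Consistency at `ρ₋ = ρ₊` fixes the PEP constants: `c₁ = p` and `c₂ = γ p v/(γ - 1)`. With the
momentum and energy fluxes so expressed through the mass flux `F`, the entropy residual
`⟦w⟧ · f^num - ⟦ψ⟧` at a pressure equilibrium collapses to `γ/(γ - 1) (⟦log ρ⟧ F - ⟦ρ⟧ v)`, so
entropy conservation forces `F = ρ^log v`.
-/

noncomputable section
open Real

theorem Real.log_sub_log_ne_zero {x y : ℝ} (hx : 0 < x) (hy : 0 < y) (hxy : x ≠ y) :
    log y - log x ≠ 0 :=
  sub_ne_zero.mpr fun h => hxy (log_injOn_pos hx hy h.symm)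

theorem IsPEP.flux_eq_of_isConsistent {γ : ℝ} {f : EulerState → EulerState → EulerState}
    (hPEP : IsPEP f) (hcons : IsConsistent γ f) (hγ : γ ≠ 1)
    {ρm ρp v p : ℝ} (hρm : 0 < ρm) (hρp : 0 < ρp) (hp : 0 < p) :
    (f (ρm, v, p) (ρp, v, p)).2.1 = v * (f (ρm, v, p) (ρp, v, p)).1 + p ∧
    (f (ρm, v, p) (ρp, v, p)).2.2 =
      v ^ 2 / 2 * (f (ρm, v, p) (ρp, v, p)).1 + γ / (γ - 1) * p * v := by
  obtain ⟨c₁, c₂, hc⟩ := hPEP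
  obtain ⟨hc₁, hc₂⟩ := hc 1 1 v p one_pos one_pos hp
  simp only [hcons 1 v p one_pos hp] at hc₁ hc₂
  obtain ⟨h₁, h₂⟩ := hc ρm ρp v p hρm hρp hp
  have hγ' : γ - 1 ≠ 0 := sub_ne_zero.mpr hγ
  refine ⟨by linear_combination h₁ - hc₁, ?_⟩
  rw [h₂]
  field_simp at hc₂ ⊢
  linear_combination -hc₂

theorem entVar_sub_entVar_of_pressure_eq (γ : ℝ) {ρm ρp p : ℝ} (v : ℝ)
    (hρm : 0 < ρm) (hρp : 0 < ρp) (hp : 0 < p) :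
    entVar γ (ρp, v, p) - entVar γ (ρm, v, p) =
      (γ / (γ - 1) * (log ρp - log ρm) - v ^ 2 / (2 * p) * (ρp - ρm),
       v / p * (ρp - ρm), -((ρp - ρm) / p)) := by
  simp only [entVar, Prod.mk_sub_mk]
  rw [log_div hp.ne' (rpow_pos_of_pos hρp γ).ne', log_div hp.ne' (rpow_pos_of_pos hρm γ).ne',
    log_rpow hρp, log_rpow hρm]
  ext <;> ring

theorem entropy_residual_of_pressure_eq (γ : ℝ) {ρm ρp p : ℝ} (v F : ℝ)
    (hρm : 0 < ρm) (hρp : 0 < ρp) (hp : 0 < p) :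
    dot3 (entVar γ (ρp, v, p) - entVar γ (ρm, v, p))
        (F, v * F + p, v ^ 2 / 2 * F + γ / (γ - 1) * p * v) - (ρp * v - ρm * v) =
      γ / (γ - 1) * ((log ρp - log ρm) * F - (ρp - ρm) * v) := by
  rw [entVar_sub_entVar_of_pressure_eq γ v hρm hρp hp, dot3]
  field_simp
  ring

theorem ec_pep_flux_at_pressure_equilibrium_general
    (γ : ℝ) (hγ : 1 < γ) (f : EulerState → EulerState → EulerState)
    (hcons : IsConsistent γ f)
    (hEC : IsEC γ f) (hPEP : IsPEP f) :
    ∀ p v ρm ρp : ℝ, 0 < p → 0 < ρm → 0 < ρp → ρm ≠ ρp →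
      f (ρm, v, p) (ρp, v, p)
        = (logMean ρm ρp * v,
           logMean ρm ρp * v^2 + p,
           (1/2) * logMean ρm ρp * v^3 + (γ/(γ-1)) * p * v) := by
  intro p v ρm ρp hp hρm hρp hne
  set F := (f (ρm, v, p) (ρp, v, p)).1
  obtain ⟨hmom, hen⟩ := hPEP.flux_eq_of_isConsistent hcons hγ.ne' hρm hρp hp
  have hflux : f (ρm, v, p) (ρp, v, p) = (F, v * F + p, v ^ 2 / 2 * F + γ / (γ - 1) * p * v) :=
    Prod.ext rfl (Prod.ext hmom hen)
  have hres : γ / (γ - 1) * ((log ρp - log ρm) * F - (ρp - ρm) * v) = 0 := by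
    rw [← entropy_residual_of_pressure_eq γ v F hρm hρp hp, ← hflux,
      hEC (ρm, v, p) (ρp, v, p) hρm hp hρp hp, sub_self]
  have hcoef : γ / (γ - 1) ≠ 0 := div_ne_zero (by linarith) (by linarith)
  have hmass : F = logMean ρm ρp * v := by
    rw [logMean, div_mul_eq_mul_div, eq_div_iff (log_sub_log_ne_zero hρm hρp hne)]
    linear_combination (mul_eq_zero.mp hres).resolve_left hcoef
  rw [hflux, hmass]
  ext <;> ring

/-- a continuous, consistent, EC and PEP two-point flux is uniquely
determined at every pressure equilibrium: `f^num = (ρ^log v, ρ^log v² + p,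
(1/2) ρ^log v³ + (γ/(γ-1)) p v)`. -/
theorem ec_pep_flux_at_pressure_equilibrium
    (γ : ℝ) (hγ : 1 < γ) (f : EulerState → EulerState → EulerState)
    (hcont : ContinuousOn (fun q : EulerState × EulerState => f q.1 q.2)
      {q : EulerState × EulerState | 0 < q.1.1 ∧ 0 < q.1.2.2 ∧ 0 < q.2.1 ∧ 0 < q.2.2.2})
    (hcons : IsConsistent γ f)
    (hEC : IsEC γ f) (hPEP : IsPEP f) :
    ∀ p v ρm ρp : ℝ, 0 < p → 0 < ρm → 0 < ρp → ρm ≠ ρp →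
      f (ρm, v, p) (ρp, v, p)
        = (logMean ρm ρp * v,
           logMean ρm ρp * v^2 + p,
           (1/2) * logMean ρm ρp * v^3 + (γ/(γ-1)) * p * v) :=
  ec_pep_flux_at_pressure_equilibrium_general γ hγ f hcons hEC hPEP
end
end

section
/- The flux of Shima et al. is not entropy-conservative: for every γ > 1 and every pair of states with common pressure p₋ = p₊ = p, common velocity v₋ = v₊ = v, and ρ₋ ≠ ρ₊, the entropy-conservation defect of the Shima et al. flux f^num equals ⟦w⟧ · f^num(u₋, u₊) − ⟦ψ⟧ = (γ/(γ−1)) v ⟦ρ⟧ ( {ρ}/ρ^log − 1 ); in particular, since {ρ} > ρ^log whenever ρ₋ ≠ ρ₊, this defect is nonzero whenever v ≠ 0, so Tadmor's EC condition fails. -/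
noncomputable section
open Real

/-- The KEP and PEP two-point flux of Shima et al. -/
def shimaFlux (γ : ℝ) (um up : EulerState) : EulerState :=
  (((um.1 + up.1)/2) * ((um.2.1 + up.2.1)/2),
   ((um.1 + up.1)/2) * ((um.2.1 + up.2.1)/2)^2 + (um.2.2 + up.2.2)/2,
   (1/2) * ((um.1 + up.1)/2) * ((um.2.1 + up.2.1)/2) * ((up.2.1*um.2.1 + um.2.1*up.2.1)/2)
     + (1/(γ-1)) * ((um.2.2 + up.2.2)/2) * ((um.2.1 + up.2.1)/2)
     + (up.2.2*um.2.1 + um.2.2*up.2.1)/2)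

/-!
At a pressure equilibrium the entropy-variable jump reduces to
`⟦w⟧ = (γ ⟦log ρ⟧/(γ-1) - v² ⟦ρ⟧/(2p), v ⟦ρ⟧/p, -⟦ρ⟧/p)`, and pairing it with the Shima flux gives
the defect `(γ/(γ-1)) v ({ρ} ⟦log ρ⟧ - ⟦ρ⟧)`, that is `(γ/(γ-1)) v ⟦ρ⟧ ({ρ}/ρ^log - 1)`
since `⟦log ρ⟧ = ⟦ρ⟧/ρ^log`. The defect vanishes only if the arithmetic and logarithmic means agree, and they
do not: `log (1 + x) > 2x/(x + 2)` for `x > 0` is exactly `ρ^log < {ρ}`.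
-/

def ecDefect (γ : ℝ) (f : EulerState → EulerState → EulerState) (um up : EulerState) : ℝ :=
  dot3 (entVar γ up - entVar γ um) (f um up) - (up.1 * up.2.1 - um.1 * um.2.1)

lemma logMean_comm (a b : ℝ) : logMean a b = logMean b a := by
  rw [logMean, logMean, ← neg_div_neg_eq, neg_sub, neg_sub]

lemma two_mul_sub_div_add_lt_log_sub_log {a b : ℝ} (ha : 0 < a) (hab : a < b) :
    2 * (b - a) / (a + b) < log b - log a := by
  have key := lt_log_one_add_of_pos (div_pos (sub_pos.2 hab) ha)
  rw [one_add_div ha.ne', add_sub_cancel, log_div (ha.trans hab).ne' ha.ne'] at key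
  convert key using 1
  field_simp
  ring

lemma logMean_pos_of_lt {a b : ℝ} (ha : 0 < a) (hab : a < b) : 0 < logMean a b :=
  div_pos (sub_pos.2 hab) (sub_pos.2 (log_lt_log ha hab))

lemma logMean_pos {a b : ℝ} (ha : 0 < a) (hb : 0 < b) (hne : a ≠ b) : 0 < logMean a b := by
  rcases hne.lt_or_gt with hab | hba
  · exact logMean_pos_of_lt ha hab
  · rw [logMean_comm]
    exact logMean_pos_of_lt hb hba

lemma logMean_lt_add_div_two_of_lt {a b : ℝ} (ha : 0 < a) (hab : a < b) :
    logMean a b < (a + b) / 2 := by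
  have hlog : 0 < log b - log a := sub_pos.2 (log_lt_log ha hab)
  have key := two_mul_sub_div_add_lt_log_sub_log ha hab
  rw [div_lt_iff₀ (by linarith)] at key
  rw [logMean, div_lt_iff₀ hlog]
  linarith

lemma logMean_lt_add_div_two {a b : ℝ} (ha : 0 < a) (hb : 0 < b) (hne : a ≠ b) :
    logMean a b < (a + b) / 2 := by
  rcases hne.lt_or_gt with hab | hba
  · exact logMean_lt_add_div_two_of_lt ha hab
  · rw [logMean_comm, add_comm]
    exact logMean_lt_add_div_two_of_lt hb hba

lemma ecDefect_shimaFlux_of_pressure_eq {γ : ℝ} (hγ : γ ≠ 1) {p v ρm ρp : ℝ}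
    (hp : 0 < p) (hρm : 0 < ρm) (hρp : 0 < ρp) (hne : ρm ≠ ρp) :
    ecDefect γ (shimaFlux γ) (ρm, v, p) (ρp, v, p)
      = (γ / (γ - 1)) * v * (ρp - ρm) * (((ρm + ρp) / 2) / logMean ρm ρp - 1) := by
  have hγ1 : γ - 1 ≠ 0 := sub_ne_zero.2 hγ
  have hρ : ρp - ρm ≠ 0 := sub_ne_zero.2 hne.symm
  have hlog : log ρp - log ρm ≠ 0 := sub_ne_zero.2 fun h => hne (log_injOn_pos hρm hρp h.symm)
  have hs : ∀ ρ, 0 < ρ → log (p / ρ ^ γ) = log p - γ * log ρ := fun ρ hρ => by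
    rw [log_div hp.ne' (rpow_pos_of_pos hρ γ).ne', log_rpow hρ]
  simp only [ecDefect, dot3, entVar, shimaFlux, logMean, Prod.mk_sub_mk, hs ρm hρm, hs ρp hρp]
  field_simp
  ring

/-- the flux of Shima et al. is not entropy-conservative. At a
pressure equilibrium with `ρ₋ ≠ ρ₊` the entropy-conservation defect equals
`(γ/(γ-1)) v ⟦ρ⟧ ({ρ}/ρ^log - 1)`; since `{ρ} > ρ^log` whenever `ρ₋ ≠ ρ₊`, the
defect is nonzero whenever `v ≠ 0`, so Tadmor's EC condition fails. -/
theorem shimaFlux_not_entropy_conservative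
    (γ : ℝ) (hγ : 1 < γ) (p v ρm ρp : ℝ)
    (hp : 0 < p) (hρm : 0 < ρm) (hρp : 0 < ρp) (hne : ρm ≠ ρp) :
    (dot3 (entVar γ (ρp, v, p) - entVar γ (ρm, v, p))
        (shimaFlux γ (ρm, v, p) (ρp, v, p)) - (ρp * v - ρm * v)
      = (γ/(γ-1)) * v * (ρp - ρm) * (((ρm + ρp)/2) / logMean ρm ρp - 1))
    ∧ logMean ρm ρp < (ρm + ρp)/2
    ∧ (v ≠ 0 →
        dot3 (entVar γ (ρp, v, p) - entVar γ (ρm, v, p))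
          (shimaFlux γ (ρm, v, p) (ρp, v, p)) - (ρp * v - ρm * v) ≠ 0) := by
  have hdefect := ecDefect_shimaFlux_of_pressure_eq hγ.ne' (v := v) hp hρm hρp hne
  have hmeans := logMean_lt_add_div_two hρm hρp hne
  refine ⟨hdefect, hmeans, fun hv => ?_⟩
  change ecDefect γ (shimaFlux γ) (ρm, v, p) (ρp, v, p) ≠ 0
  have hratio : 1 < ((ρm + ρp) / 2) / logMean ρm ρp :=
    (one_lt_div (logMean_pos hρm hρp hne)).2 hmeans
  rw [hdefect]
  have hγpos : 0 < γ / (γ - 1) := div_pos (by linarith) (by linarith)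
  exact mul_ne_zero (mul_ne_zero (mul_ne_zero hγpos.ne' hv) (sub_ne_zero.2 hne.symm))
    (sub_ne_zero.2 hratio.ne')
end
end

section
/- The density average forced by EC and PEP becomes the arithmetic mean exactly in Harten's one-parameter family at α = −2γ: let γ > 1 and h(s) = (−γ/(γ−1)) e^{−s/γ} (the member of Harten's family h(s) = ((γ+α)/(γ−1)) e^{s/(γ+α)} with α = −2γ). Then for every p > 0 and all densities ρ₋ ≠ ρ₊ > 0, with s_± = log(p/ρ_±^γ), one has ⟦ρ h'(s)⟧ / ⟦γ h'(s) − h(s)⟧ = {ρ}/γ, i.e., this density average is proportional to the arithmetic mean {ρ} = (ρ₋ + ρ₊)/2. -/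
noncomputable section
open Real

/-- The member of Harten's one-parameter family
`h(s) = ((γ+α)/(γ-1)) e^{s/(γ+α)}` with `α = -2γ`, i.e.
`h(s) = (-γ/(γ-1)) e^{-s/γ}`. -/
def hartenHminus2γ (γ : ℝ) : ℝ → ℝ := fun s => (-γ/(γ-1)) * Real.exp (-s/γ)

lemma hartenHminus2γ_deriv (γ : ℝ) (hγ : 1 < γ) (s : ℝ) :
    deriv (hartenHminus2γ γ) s = (1/(γ-1)) * Real.exp (-s/γ) := by
  have hγ0 : γ ≠ 0 := by linarith
  have hγ1 : γ - 1 ≠ 0 := by linarith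
  have h : HasDerivAt (hartenHminus2γ γ) ((-γ/(γ-1)) * (Real.exp (-s/γ) * (-1/γ))) s := by
    have h1 : HasDerivAt (fun s : ℝ => -s/γ) (-1/γ) s := by
      simpa using ((hasDerivAt_id s).neg.div_const γ)
    exact (h1.exp.const_mul _)
  rw [h.deriv]
  field_simp

lemma exp_key (γ : ℝ) (hγ : 1 < γ) (p : ℝ) (hp : 0 < p) (ρ : ℝ) (hρ : 0 < ρ) :
    Real.exp (-(Real.log (p / ρ ^ γ))/γ) = p ^ (-1/γ) * ρ := by
  have hγ0 : γ ≠ 0 := by linarith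
  have hρpow : (0:ℝ) < ρ ^ γ := Real.rpow_pos_of_pos hρ γ
  have hpos : (0:ℝ) < p / ρ ^ γ := div_pos hp hρpow
  rw [show -(Real.log (p / ρ ^ γ))/γ = Real.log (p / ρ ^ γ) * (-1/γ) by ring,
    ← Real.rpow_def_of_pos hpos, Real.div_rpow hp.le hρpow.le,
    ← Real.rpow_mul hρ.le, show γ * (-1/γ) = -1 by field_simp, Real.rpow_neg_one]
  field_simp

/-- the density average `⟦ρ h'(s)⟧ / ⟦γ h'(s) - h(s)⟧` forced by EC
and PEP becomes (proportional to) the arithmetic mean exactly at `α = -2γ` in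
Harten's family: for `h(s) = (-γ/(γ-1)) e^{-s/γ}` and any common pressure `p > 0`
and densities `ρ₋ ≠ ρ₊ > 0` with `s_± = log(p/ρ_±^γ)`, the average equals `{ρ}/γ`. -/
theorem harten_alpha_minus_two_gamma_arithmetic_mean
    (γ : ℝ) (hγ : 1 < γ) (p : ℝ) (hp : 0 < p)
    (ρm ρp : ℝ) (hρm : 0 < ρm) (hρp : 0 < ρp) (hne : ρm ≠ ρp)
    (sm sp : ℝ) (hsm : sm = Real.log (p / ρm ^ γ)) (hsp : sp = Real.log (p / ρp ^ γ)) :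
    (ρp * deriv (hartenHminus2γ γ) sp - ρm * deriv (hartenHminus2γ γ) sm)
      / ((γ * deriv (hartenHminus2γ γ) sp - hartenHminus2γ γ sp)
          - (γ * deriv (hartenHminus2γ γ) sm - hartenHminus2γ γ sm))
    = ((ρm + ρp)/2) / γ := by
  have hγ0 : γ ≠ 0 := by linarith
  have hγ1 : γ - 1 ≠ 0 := by linarith
  have hc : (0:ℝ) < p ^ (-1/γ) := Real.rpow_pos_of_pos hp _
  have hem : Real.exp (-sm/γ) = p ^ (-1/γ) * ρm := by
    rw [hsm]; exact exp_key γ hγ p hp ρm hρm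
  have hep : Real.exp (-sp/γ) = p ^ (-1/γ) * ρp := by
    rw [hsp]; exact exp_key γ hγ p hp ρp hρp
  have hd : ρp - ρm ≠ 0 := sub_ne_zero.mpr (Ne.symm hne)
  rw [hartenHminus2γ_deriv γ hγ, hartenHminus2γ_deriv γ hγ]
  unfold hartenHminus2γ
  rw [hem, hep]
  rw [div_eq_div_iff, ]
  · ring
  · have : (γ * (1 / (γ - 1) * (p ^ (-1 / γ) * ρp)) - -γ / (γ - 1) * (p ^ (-1 / γ) * ρp) -
        (γ * (1 / (γ - 1) * (p ^ (-1 / γ) * ρm)) - -γ / (γ - 1) * (p ^ (-1 / γ) * ρm)))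
        = (2*γ/(γ-1)) * (p ^ (-1/γ)) * (ρp - ρm) := by ring
    rw [this]
    exact mul_ne_zero (mul_ne_zero (by positivity) hc.ne') hd
  · exact hγ0
end
end

section
/- Entropy conservation of the split-form SBP scheme with the logarithmic-mean flux for linear advection: let D and M be N×N real matrices such that M is diagonal with positive diagonal entries, M D + Dᵀ M = 0, and every row of D sums to zero. Let u : I → (0, ∞)^N be a differentiable solution of the split-form semidiscretization of the linear advection equation, ∂_t u_i + Σ_l 2 D_{i,l} ℓ(u_i, u_l) = 0, where ℓ(a, b) = (a − b)/(log a − log b) for a ≠ b and ℓ(a, a) = a is the logarithmic mean. Then the total discrete entropy Σ_i M_{ii} ( u_i log u_i − u_i ) is constant in time. -/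
noncomputable section
open Real BigOperators

/-- The logarithmic mean, extended along the diagonal:
`ℓ(a, b) = (a - b)/(log a - log b)` for `a ≠ b`, `ℓ(a, a) = a`. -/
def logMeanFlux (a b : ℝ) : ℝ :=
  if a = b then a else (a - b) / (Real.log a - Real.log b)

/-!
The derivative of the discrete entropy is `Σᵢ Mᵢᵢ wᵢ ∂ₜuᵢ` with `wᵢ = log uᵢ`. Since `M` is
diagonal, the SBP property says that `Aᵢₗ = Mᵢᵢ Dᵢₗ` is skew-symmetric, and the logarithmic mean
is symmetric, so the entropy production symmetrizes to `Σᵢₗ Aᵢₗ (wᵢ - wₗ) ℓ(uᵢ, uₗ)`. Tadmor's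
condition `(log a - log b) ℓ(a, b) = a - b` turns this into `Σᵢₗ Aᵢₗ (uᵢ - uₗ)`, which
symmetrizes back to `2 Σᵢ Mᵢᵢ uᵢ Σₗ Dᵢₗ = 0` by consistency of `D`.
-/

open Finset
open scoped Matrix

theorem logMeanFlux_comm (a b : ℝ) : logMeanFlux a b = logMeanFlux b a := by
  unfold logMeanFlux
  rcases eq_or_ne a b with rfl | h
  · rfl
  · rw [if_neg h, if_neg h.symm, ← neg_sub b a, ← neg_sub (log b), neg_div_neg_eq]

theorem log_sub_log_mul_logMeanFlux {a b : ℝ} (ha : 0 < a) (hb : 0 < b) :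
    (log a - log b) * logMeanFlux a b = a - b := by
  unfold logMeanFlux
  rcases eq_or_ne a b with rfl | h
  · simp
  · have hlog : log a - log b ≠ 0 :=
      sub_ne_zero.mpr fun hab => h (log_injOn_pos (Set.mem_Ioi.mpr ha) (Set.mem_Ioi.mpr hb) hab)
    rw [if_neg h, mul_div_cancel₀ _ hlog]

theorem HasDerivAt.mul_log_sub_self {f : ℝ → ℝ} {f' x : ℝ} (hf : HasDerivAt f f' x)
    (hx : f x ≠ 0) : HasDerivAt (fun y => f y * Real.log (f y) - f y) (Real.log (f x) * f') x :=
  ((hf.fun_mul (hf.log hx)).fun_sub hf).congr_deriv (by field_simp; ring)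

theorem Convex.is_const_of_forall_hasDerivAt_zero {G : Type*} [NormedAddCommGroup G]
    [NormedSpace ℝ G] {f : ℝ → G} {s : Set ℝ} (hs : Convex ℝ s)
    (hf : ∀ x ∈ s, HasDerivAt f 0 x) {x y : ℝ} (hx : x ∈ s) (hy : y ∈ s) : f x = f y := by
  have h := hs.norm_image_sub_le_of_norm_hasDerivWithin_le (f' := fun _ => 0) (C := 0)
    (fun z hz => (hf z hz).hasDerivWithinAt) (fun _ _ => by simp) hx hy
  simpa [sub_eq_zero, eq_comm] using h

section SplitForm

variable {n R : Type*} [Fintype n] [CommRing R]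

theorem Matrix.IsDiag.mul_apply_eq_neg_of_mul_add_transpose_mul_eq_zero [DecidableEq n]
    {M D : Matrix n n R} (hM : M.IsDiag) (hSBP : M * D + Dᵀ * M = 0) (i l : n) :
    M i i * D i l = -(M l l * D l i) := by
  have h := congrFun (congrFun hSBP i) l
  rw [← hM.diagonal_diag] at h
  simpa [Matrix.diagonal_mul, Matrix.mul_diagonal, mul_comm, eq_neg_iff_add_eq_zero] using h

theorem two_mul_sum_sum_skew_mul_symm {A F : n → n → R} (hA : ∀ i l, A i l = -A l i)
    (hF : ∀ i l, F i l = F l i) (w : n → R) :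
    2 * ∑ i, ∑ l, A i l * w i * F i l = ∑ i, ∑ l, A i l * (w i - w l) * F i l := by
  have hswap : ∑ i, ∑ l, A i l * w l * F i l = -∑ i, ∑ l, A i l * w i * F i l := by
    rw [sum_comm, ← sum_neg_distrib]
    refine sum_congr rfl fun i _ => ?_
    rw [← sum_neg_distrib]
    refine sum_congr rfl fun l _ => ?_
    rw [hA, hF]
    ring
  simp only [mul_sub, sub_mul, sum_sub_distrib, hswap]
  ring

/-- `hEC` is Tadmor's entropy-conservation condition for the two-point flux `F`, with entropy
variables `w` and flux potential `ψ`. -/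
theorem splitForm_entropyProduction_eq_zero [DecidableEq n] {M D : Matrix n n R} (hM : M.IsDiag)
    (hSBP : M * D + Dᵀ * M = 0) (hD : ∀ i, ∑ l, D i l = 0) {w ψ : n → R} {F : n → n → R}
    (hF : ∀ i l, F i l = F l i) (hEC : ∀ i l, (w i - w l) * F i l = ψ i - ψ l) :
    ∑ i, M i i * w i * ∑ l, 2 * D i l * F i l = 0 := by
  have hA := hM.mul_apply_eq_neg_of_mul_add_transpose_mul_eq_zero hSBP
  calc ∑ i, M i i * w i * ∑ l, 2 * D i l * F i l
      = 2 * ∑ i, ∑ l, M i i * D i l * w i * F i l := by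
        simp only [mul_sum]
        refine sum_congr rfl fun i _ => sum_congr rfl fun l _ => ?_
        ring
    _ = ∑ i, ∑ l, M i i * D i l * (ψ i - ψ l) * 1 := by
        rw [two_mul_sum_sum_skew_mul_symm hA hF]
        simp only [mul_assoc, hEC, mul_one]
    -- the factor `1` is the symmetric flux of a second symmetrization
    _ = 2 * ∑ i, ∑ l, M i i * D i l * ψ i * 1 :=
        (two_mul_sum_sum_skew_mul_symm hA (fun _ _ => rfl) ψ).symm
    _ = 0 := by
        simp only [mul_one, mul_right_comm (M _ _) (D _ _), ← sum_mul, ← mul_sum, hD]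
        simp

end SplitForm

theorem sbp_logmean_entropy_conservation_general
    (N : ℕ) (D M : Matrix (Fin N) (Fin N) ℝ)
    (hMdiag : ∀ i j, i ≠ j → M i j = 0)
    (hSBP : M * D + D.transpose * M = 0)
    (hDcons : ∀ i, ∑ l, D i l = 0)
    (I : Set ℝ) (hIconv : Convex ℝ I)
    (u : ℝ → Fin N → ℝ)
    (hupos : ∀ t ∈ I, ∀ i, 0 < u t i)
    (hode : ∀ t ∈ I, ∀ i : Fin N,
      HasDerivAt (fun τ => u τ i)
        (-(∑ l, 2 * D i l * logMeanFlux (u t i) (u t l))) t) :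
    ∀ t₁ ∈ I, ∀ t₂ ∈ I,
      ∑ i, M i i * (u t₁ i * Real.log (u t₁ i) - u t₁ i)
        = ∑ i, M i i * (u t₂ i * Real.log (u t₂ i) - u t₂ i) := by
  intro t₁ ht₁ t₂ ht₂
  refine hIconv.is_const_of_forall_hasDerivAt_zero
    (f := fun t => ∑ i, M i i * (u t i * log (u t i) - u t i)) (fun t ht => ?_) ht₁ ht₂
  have hproduction : ∑ i, M i i * (log (u t i) * -∑ l, 2 * D i l * logMeanFlux (u t i) (u t l))
      = 0 := by
    simp only [mul_neg, ← mul_assoc, sum_neg_distrib, neg_eq_zero]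
    exact splitForm_entropyProduction_eq_zero (fun i j hij => hMdiag i j hij) hSBP hDcons
      (fun _ _ => logMeanFlux_comm _ _)
      (fun i l => log_sub_log_mul_logMeanFlux (hupos t ht i) (hupos t ht l))
  rw [← hproduction]
  exact HasDerivAt.fun_sum fun i _ =>
    (HasDerivAt.mul_log_sub_self (hode t ht i) (hupos t ht i).ne').const_mul (M i i)

/-- entropy conservation of the split-form SBP scheme with the
logarithmic-mean two-point flux for the linear advection equation. If `(D, M)` is
a periodic SBP operator pair (`M` diagonal positive, `M D + Dᵀ M = 0`, rows of `D`
sum to zero) and `u` is a positive differentiable solution of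
`∂ₜ u_i + Σ_l 2 D_{i,l} ℓ(u_i, u_l) = 0` on an open interval `I`, then the total
discrete entropy `Σ_i M_{ii} (u_i log u_i - u_i)` is constant in time. -/
theorem sbp_logmean_entropy_conservation
    (N : ℕ) (D M : Matrix (Fin N) (Fin N) ℝ)
    (hMdiag : ∀ i j, i ≠ j → M i j = 0) (hMpos : ∀ i, 0 < M i i)
    (hSBP : M * D + D.transpose * M = 0)
    (hDcons : ∀ i, ∑ l, D i l = 0)
    (I : Set ℝ) (hIopen : IsOpen I) (hIconv : Convex ℝ I)
    (u : ℝ → Fin N → ℝ)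
    (hupos : ∀ t ∈ I, ∀ i, 0 < u t i)
    (hode : ∀ t ∈ I, ∀ i : Fin N,
      HasDerivAt (fun τ => u τ i)
        (-(∑ l, 2 * D i l * logMeanFlux (u t i) (u t l))) t) :
    ∀ t₁ ∈ I, ∀ t₂ ∈ I,
      ∑ i, M i i * (u t₁ i * Real.log (u t₁ i) - u t₁ i)
        = ∑ i, M i i * (u t₂ i * Real.log (u t₂ i) - u t₂ i) :=
  sbp_logmean_entropy_conservation_general N D M hMdiag hSBP hDcons I hIconv u hupos hode
end
end
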